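/- Let K(a_{n,k}) be a Köthe space and Λ₁(β) a nuclear power series space of finite type. Let θ be a sequence with θ_0 ≠ 0. The lower triangular Toeplitz operator T̂_θ : K(a_{n,k}) → Λ₁(β) is compact if and only if θ ∈ Λ₁(β) and there exists m ∈ ℕ such that for every k ∈ ℕ there is C > 0 with e^{-β_n/k} ≤ C a_{n,m} for all n ∈ ℕ. -/

import Mathlib

open scoped BigOperators
noncomputable section

/-- A Köthe matrix: non-negative entries, each row eventually positive,
rows non-decreasing in the second index. -/
structure IsKotheMatrix (a : ℕ → ℕ → ℝ) : Prop where
  nonneg : ∀ n k, 0 ≤ a n k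
  pos : ∀ n, ∃ k, 0 < a n k
  mono : ∀ n k, a n k ≤ a n (k + 1)

/-- Membership in the Köthe space `K(a)`. -/
def InKothe (a : ℕ → ℕ → ℝ) (x : ℕ → ℝ) : Prop :=
  ∀ k, Summable fun n => |x n| * a n k

/-- The `k`-th seminorm of the Köthe space `K(a)`. -/
def kNorm (a : ℕ → ℕ → ℝ) (k : ℕ) (x : ℕ → ℝ) : ℝ :=
  ∑' n, |x n| * a n k

/-- Grothendieck–Pietsch nuclearity criterion for a Köthe space. -/
def IsNuclearKothe (a : ℕ → ℕ → ℝ) : Prop :=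
  ∀ k, ∃ l, k < l ∧ Summable fun n => a n k / a n l

/-- The `n`-th unit vector. -/
def unitVec (n : ℕ) : ℕ → ℝ := fun j => if j = n then 1 else 0

/-- Weight of the finite type power series space `Λ₁(β)`. -/
def finW (β : ℕ → ℝ) (k : ℕ) (n : ℕ) : ℝ := Real.exp (-(β n) / (k : ℝ))

/-- Weight of the infinite type power series space `Λ_∞(β)`. -/
def infW (β : ℕ → ℝ) (k : ℕ) (n : ℕ) : ℝ := Real.exp ((k : ℝ) * β n)

/-- The `k`-th seminorm of `Λ₁(β)` (for `0 < k`). -/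
def finNorm (β : ℕ → ℝ) (k : ℕ) (x : ℕ → ℝ) : ℝ := ∑' n, |x n| * finW β k n

/-- The `k`-th seminorm of `Λ_∞(β)`. -/
def infNorm (β : ℕ → ℝ) (k : ℕ) (x : ℕ → ℝ) : ℝ := ∑' n, |x n| * infW β k n

/-- Membership in `Λ₁(β)`. -/
def memFin (β : ℕ → ℝ) (x : ℕ → ℝ) : Prop :=
  ∀ k : ℕ, 0 < k → Summable fun n => |x n| * finW β k n

/-- Membership in `Λ_∞(β)`. -/
def memInf (β : ℕ → ℝ) (x : ℕ → ℝ) : Prop :=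
  ∀ k : ℕ, 0 < k → Summable fun n => |x n| * infW β k n

/-- Lower triangular Toeplitz operator `T̂_θ`, `T̂_θ e_n = ∑_{j ≥ n} θ_{j-n} e_j`. -/
def hatT (θ : ℕ → ℝ) (x : ℕ → ℝ) : ℕ → ℝ :=
  fun j => ∑ i ∈ Finset.range (j + 1), θ (j - i) * x i

/-- Upper triangular Toeplitz operator `Ť_θ`, `Ť_θ e_n = ∑_{j ≤ n} θ_{n-j} e_j`. -/
def checkT (θ : ℕ → ℝ) (x : ℕ → ℝ) : ℕ → ℝ :=
  fun j => ∑' i, θ i * x (j + i)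

/-- Operator defined by a matrix acting on sequences. -/
def matOp (t : ℕ → ℕ → ℝ) (x : ℕ → ℝ) : ℕ → ℝ :=
  fun j => ∑' n, t j n * x n

/-- The growth condition (3.5): `β_s ≤ M (β_{s-t} + β_t)` for all `s > t`. -/
def GrowthCond (β : ℕ → ℝ) (M : ℕ) : Prop :=
  ∀ t s : ℕ, t < s → β s ≤ (M : ℝ) * (β (s - t) + β t)


/-!
Testing `T̂_θ` on the unit vectors gives `T̂_θ e₀ = θ` and `‖T̂_θ e_n‖_k ≥ |θ₀| e^{-β_n/k}`, which
forces both conditions. Conversely, since `β` is monotone, `β_{j-i} + β_i ≤ 2 β_j` for `i ≤ j`,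
so the `k`-th weight splits into a product of `2k`-th weights and `‖T̂_θ x‖_k` is bounded by the
Cauchy product `‖x‖_{2k} ‖θ‖_{2k}`; the weight condition then bounds `‖x‖_{2k}` by `C ‖x‖_m`.
-/

open Finset

lemma hatT_unitVec (θ : ℕ → ℝ) (n j : ℕ) :
    hatT θ (unitVec n) j = if n ≤ j then θ (j - n) else 0 := by
  simp [hatT, unitVec, mul_ite]

lemma hatT_unitVec_zero (θ : ℕ → ℝ) : hatT θ (unitVec 0) = θ := by
  funext j
  simp [hatT_unitVec]

lemma unitVec_inKothe (a : ℕ → ℕ → ℝ) (n : ℕ) : InKothe a (unitVec n) := fun _ =>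
  summable_of_ne_finset_zero (s := {n}) fun j hj => by
    simp [unitVec, mem_singleton.not.mp hj]

lemma kNorm_unitVec (a : ℕ → ℕ → ℝ) (m n : ℕ) : kNorm a m (unitVec n) = a n m := by
  rw [kNorm, tsum_eq_single n fun j hj => by simp [unitVec, hj]]
  simp [unitVec]

lemma finW_pos (β : ℕ → ℝ) (k n : ℕ) : 0 < finW β k n := Real.exp_pos _

section PowerSeriesSpace

variable {β : ℕ → ℝ}

lemma finW_le_finW_two_mul_sub_mul (hβ : Monotone β) (k : ℕ) {i j : ℕ} (hij : i ≤ j) :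
    finW β k j ≤ finW β (2 * k) (j - i) * finW β (2 * k) i := by
  have hsum : β (j - i) + β i ≤ 2 * β j := by
    linarith [hβ (Nat.sub_le j i), hβ hij]
  have hk : (0 : ℝ) ≤ 2 * k := by positivity
  rw [finW, finW, finW, ← Real.exp_add, Real.exp_le_exp, Nat.cast_mul, Nat.cast_ofNat,
    ← add_div, ← mul_div_mul_left (-(β j)) (k : ℝ) two_ne_zero]
  exact div_le_div_of_nonneg_right (by linarith) hk

lemma abs_mul_finW_le_finNorm {k : ℕ} {x : ℕ → ℝ}
    (hx : Summable fun n => |x n| * finW β k n) (n : ℕ) :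
    |x n| * finW β k n ≤ finNorm β k x :=
  hx.le_tsum n fun j _ => mul_nonneg (abs_nonneg _) (finW_pos β k j).le

lemma finNorm_pos {k : ℕ} {x : ℕ → ℝ} (hx : Summable fun n => |x n| * finW β k n)
    {n : ℕ} (hn : x n ≠ 0) : 0 < finNorm β k x :=
  (mul_pos (abs_pos.mpr hn) (finW_pos β k n)).trans_le (abs_mul_finW_le_finNorm hx n)

lemma finNorm_le_mul_kNorm {a : ℕ → ℕ → ℝ} {k m : ℕ} {C : ℝ}
    (hw : ∀ n, finW β k n ≤ C * a n m) {x : ℕ → ℝ} (hx : Summable fun n => |x n| * a n m) :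
    (Summable fun n => |x n| * finW β k n) ∧ finNorm β k x ≤ C * kNorm a m x := by
  have hle : ∀ n, |x n| * finW β k n ≤ C * (|x n| * a n m) := fun n => by
    rw [mul_left_comm]
    exact mul_le_mul_of_nonneg_left (hw n) (abs_nonneg _)
  have hs : Summable fun n => |x n| * finW β k n :=
    .of_nonneg_of_le (fun n => mul_nonneg (abs_nonneg _) (finW_pos β k n).le) hle (hx.mul_left C)
  refine ⟨hs, ?_⟩
  rw [finNorm, kNorm, ← tsum_mul_left]
  exact hs.tsum_le_tsum hle (hx.mul_left C)

lemma abs_hatT_mul_finW_le (hβ : Monotone β) (k : ℕ) (θ x : ℕ → ℝ) (j : ℕ) :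
    |hatT θ x j| * finW β k j ≤ ∑ i ∈ range (j + 1),
      (|x i| * finW β (2 * k) i) * (|θ (j - i)| * finW β (2 * k) (j - i)) := by
  have habs : |hatT θ x j| ≤ ∑ i ∈ range (j + 1), |θ (j - i)| * |x i| :=
    (abs_sum_le_sum_abs _ _).trans_eq (sum_congr rfl fun i _ => abs_mul _ _)
  refine (mul_le_mul_of_nonneg_right habs (finW_pos β k j).le).trans ?_
  rw [sum_mul]
  refine sum_le_sum fun i hi => ?_
  have hw := finW_le_finW_two_mul_sub_mul hβ k (Nat.lt_succ_iff.mp (mem_range.mp hi))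
  calc |θ (j - i)| * |x i| * finW β k j
      ≤ |θ (j - i)| * |x i| * (finW β (2 * k) (j - i) * finW β (2 * k) i) :=
        mul_le_mul_of_nonneg_left hw (by positivity)
    _ = |x i| * finW β (2 * k) i * (|θ (j - i)| * finW β (2 * k) (j - i)) := by ring

lemma finNorm_hatT_le (hβ : Monotone β) {k : ℕ} {θ x : ℕ → ℝ}
    (hx : Summable fun n => |x n| * finW β (2 * k) n)
    (hθ : Summable fun n => |θ n| * finW β (2 * k) n) :
    (Summable fun j => |hatT θ x j| * finW β k j) ∧
      finNorm β k (hatT θ x) ≤ finNorm β (2 * k) x * finNorm β (2 * k) θ := by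
  set u : ℕ → ℝ := fun n => |x n| * finW β (2 * k) n
  set v : ℕ → ℝ := fun n => |θ n| * finW β (2 * k) n
  have hprod : Summable fun p : ℕ × ℕ => u p.1 * v p.2 :=
    hx.mul_of_nonneg hθ (fun n => mul_nonneg (abs_nonneg _) (finW_pos β _ n).le)
      (fun n => mul_nonneg (abs_nonneg _) (finW_pos β _ n).le)
  have hcauchy : Summable fun j => ∑ i ∈ range (j + 1), u i * v (j - i) :=
    summable_sum_mul_range_of_summable_mul hprod
  have hle : ∀ j, |hatT θ x j| * finW β k j ≤ ∑ i ∈ range (j + 1), u i * v (j - i) :=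
    abs_hatT_mul_finW_le hβ k θ x
  have hs : Summable fun j => |hatT θ x j| * finW β k j :=
    .of_nonneg_of_le (fun j => mul_nonneg (abs_nonneg _) (finW_pos β k j).le) hle hcauchy
  refine ⟨hs, ?_⟩
  rw [finNorm, finNorm, finNorm, hx.tsum_mul_tsum_eq_tsum_sum_range hθ hprod]
  exact hs.tsum_le_tsum hle hcauchy

lemma finW_le_of_finNorm_hatT_unitVec_le {a : ℕ → ℕ → ℝ} {θ : ℕ → ℝ} {k m n : ℕ} {C : ℝ}
    (hθ : θ 0 ≠ 0) (hs : Summable fun j => |hatT θ (unitVec n) j| * finW β k j)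
    (hC : finNorm β k (hatT θ (unitVec n)) ≤ C * kNorm a m (unitVec n)) :
    finW β k n ≤ C / |θ 0| * a n m := by
  have h := (abs_mul_finW_le_finNorm hs n).trans hC
  rw [hatT_unitVec, if_pos le_rfl, Nat.sub_self, kNorm_unitVec] at h
  rw [div_mul_eq_mul_div, le_div_iff₀ (abs_pos.mpr hθ), mul_comm]
  exact h

lemma finNorm_hatT_le_kNorm {a : ℕ → ℕ → ℝ} (hβ : Monotone β) {θ : ℕ → ℝ}
    (hθ : θ 0 ≠ 0) (hθf : memFin β θ) {m : ℕ}
    (hw : ∀ k : ℕ, 0 < k → ∃ C > 0, ∀ n, finW β k n ≤ C * a n m) {k : ℕ} (hk : 0 < k) :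
    ∃ C > 0, ∀ x, InKothe a x → (Summable fun j => |hatT θ x j| * finW β k j) ∧
      finNorm β k (hatT θ x) ≤ C * kNorm a m x := by
  have hθs := hθf (2 * k) (by omega)
  obtain ⟨C, hC, hCw⟩ := hw (2 * k) (by omega)
  refine ⟨C * finNorm β (2 * k) θ, mul_pos hC (finNorm_pos hθs hθ), fun x hx => ?_⟩
  obtain ⟨hxs, hxC⟩ := finNorm_le_mul_kNorm hCw (hx m)
  obtain ⟨hTs, hTx⟩ := finNorm_hatT_le hβ hxs hθs
  refine ⟨hTs, hTx.trans ?_⟩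
  rw [mul_right_comm]
  exact mul_le_mul_of_nonneg_right hxC (finNorm_pos hθs hθ).le

end PowerSeriesSpace

theorem stmt4_general (a : ℕ → ℕ → ℝ)
    (β : ℕ → ℝ) (hβm : Monotone β)
    (θ : ℕ → ℝ) (hθ : θ 0 ≠ 0) :
    ((∀ x, InKothe a x → memFin β (hatT θ x)) ∧
      ∃ m, ∀ k : ℕ, 0 < k → ∃ C > 0, ∀ x, InKothe a x →
        finNorm β k (hatT θ x) ≤ C * kNorm a m x)
    ↔ (memFin β θ ∧
       ∃ m, ∀ k : ℕ, 0 < k → ∃ C > 0, ∀ n, finW β k n ≤ C * a n m) := by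
  constructor
  · rintro ⟨hmem, m, hbound⟩
    refine ⟨hatT_unitVec_zero θ ▸ hmem _ (unitVec_inKothe a 0), m, fun k hk => ?_⟩
    obtain ⟨C, hC, hCx⟩ := hbound k hk
    exact ⟨C / |θ 0|, div_pos hC (abs_pos.mpr hθ), fun n =>
      finW_le_of_finNorm_hatT_unitVec_le hθ (hmem _ (unitVec_inKothe a n) k hk)
        (hCx _ (unitVec_inKothe a n))⟩
  · rintro ⟨hθf, m, hw⟩
    have hT := fun k (hk : 0 < k) => finNorm_hatT_le_kNorm hβm hθ hθf hw hk
    refine ⟨fun x hx k hk => ?_, m, fun k hk => ?_⟩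
    · obtain ⟨C, -, hC⟩ := hT k hk
      exact (hC x hx).1
    · obtain ⟨C, hCpos, hC⟩ := hT k hk
      exact ⟨C, hCpos, fun x hx => (hC x hx).2⟩

/-- `T̂_θ : K(a) → Λ₁(β)` (with `Λ₁(β)` nuclear) is compact iff
`θ ∈ Λ₁(β)` and there is `m` such that for all `k` there is `C > 0` with
`e^{-β_n/k} ≤ C a_{n,m}` for all `n`. -/
theorem stmt4 (a : ℕ → ℕ → ℝ) (ha : IsKotheMatrix a)
    (β : ℕ → ℝ) (hβ0 : ∀ n, 0 ≤ β n) (hβm : Monotone β)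
    (hβi : Filter.Tendsto β Filter.atTop Filter.atTop)
    (hnuc : ∀ k : ℕ, 0 < k → ∃ l, k < l ∧
      Summable fun n => Real.exp (-(β n) / (k : ℝ) + β n / (l : ℝ)))
    (θ : ℕ → ℝ) (hθ : θ 0 ≠ 0) :
    ((∀ x, InKothe a x → memFin β (hatT θ x)) ∧
      ∃ m, ∀ k : ℕ, 0 < k → ∃ C > 0, ∀ x, InKothe a x →
        finNorm β k (hatT θ x) ≤ C * kNorm a m x)
    ↔ (memFin β θ ∧
       ∃ m, ∀ k : ℕ, 0 < k → ∃ C > 0, ∀ n, finW β k n ≤ C * a n m) :=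
  stmt4_general a β hβm θ hθ
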